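/- Let M₁, M₂ be Γ-semigroups and T : M₁ → P*(M₂) a strong set-valued anti-homomorphism. If Q is a quasi-ideal of M₂ and T_(Q) is nonempty, then T_(Q)ΓM₁ ∩ M₁ΓT_(Q) ⊆ T_(Q), i.e., T_(Q) is a quasi-ideal of M₁. -/

import Mathlib

/-- Product of two subsets of a Γ-semigroup: XΓY = {xγy}. -/
def gprod {M G : Type} (mul : M → G → M → M) (X Y : Set M) : Set M :=
  {z | ∃ x ∈ X, ∃ y ∈ Y, ∃ γ : G, z = mul x γ y}

/-- Product UαV of two subsets with a fixed γ. -/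
def aprod {M G : Type} (mul : M → G → M → M) (U : Set M) (γ : G) (V : Set M) : Set M :=
  {z | ∃ u ∈ U, ∃ v ∈ V, z = mul u γ v}

/-- Upper approximation. -/
def upperApprox {A B : Type} (T : A → Set B) (S : Set B) : Set A :=
  {x | (T x ∩ S).Nonempty}

/-- Lower approximation. -/
def lowerApprox {A B : Type} (T : A → Set B) (S : Set B) : Set A :=
  {x | T x ⊆ S}

/-! The lower approximation `T_(·)` is monotone and commutes with intersections, and for an
anti-homomorphism `T`, `X ⊆ T_(A)` and `Y ⊆ T_(B)` give `XΓY ⊆ T_(BΓA)`. Hence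
`T_(Q)ΓM₁ ∩ M₁ΓT_(Q) ⊆ T_(M₂ΓQ) ∩ T_(QΓM₂) = T_(M₂ΓQ ∩ QΓM₂) ⊆ T_(Q)`. -/

section LowerApprox

variable {A B : Type} (T : A → Set B)

theorem lowerApprox_mono {S S' : Set B} (h : S ⊆ S') : lowerApprox T S ⊆ lowerApprox T S' :=
  fun _ hx => hx.trans h

theorem lowerApprox_inter (S S' : Set B) :
    lowerApprox T (S ∩ S') = lowerApprox T S ∩ lowerApprox T S' := by
  ext x
  exact Set.subset_inter_iff

theorem lowerApprox_univ : lowerApprox T Set.univ = Set.univ :=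
  Set.eq_univ_of_forall fun x => Set.subset_univ (T x)

end LowerApprox

section Products

variable {M G : Type} (mul : M → G → M → M)

theorem gprod_mono {X X' Y Y' : Set M} (hX : X ⊆ X') (hY : Y ⊆ Y') :
    gprod mul X Y ⊆ gprod mul X' Y' := by
  rintro _ ⟨x, hx, y, hy, γ, rfl⟩
  exact ⟨x, hX hx, y, hY hy, γ, rfl⟩

theorem aprod_subset_gprod (U : Set M) (γ : G) (V : Set M) :
    aprod mul U γ V ⊆ gprod mul U V := by
  rintro _ ⟨u, hu, v, hv, rfl⟩
  exact ⟨u, hu, v, hv, γ, rfl⟩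

end Products

theorem gprod_subset_lowerApprox_gprod {M1 M2 G : Type} {mul1 : M1 → G → M1 → M1}
    {mul2 : M2 → G → M2 → M2} {T : M1 → Set M2}
    (hstrong : ∀ (a b : M1) (α : G), T (mul1 a α b) = aprod mul2 (T b) α (T a))
    {X Y : Set M1} {S S' : Set M2} (hX : X ⊆ lowerApprox T S) (hY : Y ⊆ lowerApprox T S') :
    gprod mul1 X Y ⊆ lowerApprox T (gprod mul2 S' S) := by
  rintro _ ⟨x, hx, y, hy, γ, rfl⟩
  rw [lowerApprox, Set.mem_ofPred_eq, hstrong]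
  exact (aprod_subset_gprod mul2 _ γ _).trans (gprod_mono mul2 (hY hy) (hX hx))

theorem stmt15_general {M1 M2 G : Type} (mul1 : M1 → G → M1 → M1) (mul2 : M2 → G → M2 → M2)
    (T : M1 → Set M2)
    (hstrong : ∀ (a b : M1) (α : G), T (mul1 a α b) = aprod mul2 (T b) α (T a)) (Q : Set M2)
    (hQ : gprod mul2 Q Set.univ ∩ gprod mul2 Set.univ Q ⊆ Q) :
    gprod mul1 (lowerApprox T Q) Set.univ ∩ gprod mul1 Set.univ (lowerApprox T Q) ⊆
      lowerApprox T Q := by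
  have huniv : (Set.univ : Set M1) ⊆ lowerApprox T Set.univ := (lowerApprox_univ T).ge
  calc _ ⊆ lowerApprox T (gprod mul2 Set.univ Q) ∩ lowerApprox T (gprod mul2 Q Set.univ) :=
        Set.inter_subset_inter (gprod_subset_lowerApprox_gprod hstrong subset_rfl huniv)
          (gprod_subset_lowerApprox_gprod hstrong huniv subset_rfl)
    _ = lowerApprox T (gprod mul2 Set.univ Q ∩ gprod mul2 Q Set.univ) :=
        (lowerApprox_inter T _ _).symm
    _ ⊆ lowerApprox T Q := lowerApprox_mono T ((Set.inter_comm _ _).subset.trans hQ)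

theorem stmt15 {M1 M2 G : Type} (mul1 : M1 → G → M1 → M1) (mul2 : M2 → G → M2 → M2)
    (hG1 : ∀ (a b c : M1) (α β : G), mul1 (mul1 a α b) β c = mul1 a α (mul1 b β c))
    (hG2 : ∀ (a b c : M2) (α β : G), mul2 (mul2 a α b) β c = mul2 a α (mul2 b β c))
    (T : M1 → Set M2) (hT : ∀ x, (T x).Nonempty)
    (hstrong : ∀ (a b : M1) (α : G), T (mul1 a α b) = aprod mul2 (T b) α (T a)) (Q : Set M2) (hQ0 : Q.Nonempty)
    (hQ : gprod mul2 Q Set.univ ∩ gprod mul2 Set.univ Q ⊆ Q)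
    (hne : (lowerApprox T Q).Nonempty) :
    gprod mul1 (lowerApprox T Q) Set.univ ∩ gprod mul1 Set.univ (lowerApprox T Q) ⊆
      lowerApprox T Q :=
  stmt15_general mul1 mul2 T hstrong Q hQ
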